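/- For the Lie algebra (ℝ⁶, μ_t) with μ_t(e₁,e₂) = √t e₅, μ_t(e₁,e₄) = (1/√t) e₆, μ_t(e₂,e₃) = −(1/√t) e₆, μ_t(e₃,e₄) = −√t e₅, t ∈ (0,1], the Ricci operator of the left-invariant metric making e₁,…,e₆ orthonormal is Ric = diag(−(t²+1)/(2t), −(t²+1)/(2t), −(t²+1)/(2t), −(t²+1)/(2t), t, 1/t). -/

import Mathlib

open Real

/-- The bracket `μ_t` on `ℝ⁶` (cf. the table: `μ_t(e₁,e₂) = √t e₅`,
`μ_t(e₁,e₄) = (1/√t) e₆`, `μ_t(e₂,e₃) = −(1/√t) e₆`, `μ_t(e₃,e₄) = −√t e₅`). -/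
noncomputable def muT (t : ℝ) (X Y : Fin 6 → ℝ) : Fin 6 → ℝ :=
  ![0, 0, 0, 0,
    Real.sqrt t * (X 0 * Y 1 - X 1 * Y 0) - Real.sqrt t * (X 2 * Y 3 - X 3 * Y 2),
    (1 / Real.sqrt t) * (X 0 * Y 3 - X 3 * Y 0)
      - (1 / Real.sqrt t) * (X 1 * Y 2 - X 2 * Y 1)]

/-- Standard basis vector of `ℝ⁶`. -/
def eb (i : Fin 6) : Fin 6 → ℝ := fun j => if j = i then 1 else 0

/-- The Ricci quadratic form `⟨Ric X, X⟩` of the left-invariant metric making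
`e₁,…,e₆` orthonormal:
`⟨Ric X, X⟩ = −(1/2) ∑ᵢⱼ ⟨μ(X,eᵢ),eⱼ⟩² + (1/4) ∑ᵢⱼ ⟨μ(eᵢ,eⱼ),X⟩²`. -/
noncomputable def ricQ (t : ℝ) (X : Fin 6 → ℝ) : ℝ :=
  -(1 / 2) * ∑ i : Fin 6, ∑ j : Fin 6, (muT t X (eb i) j) ^ 2
    + (1 / 4) * ∑ i : Fin 6, ∑ j : Fin 6,
        (∑ k : Fin 6, muT t (eb i) (eb j) k * X k) ^ 2

/-! Only the e₅- and e₆-components of `μ_t` are nonzero, and no pair `(eᵢ, eⱼ)` brackets into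
both, so the two double sums in `ricQ` are diagonal: the first is `(t + 1/t)(x₁² + ⋯ + x₄²)`, the
second `4t x₅² + (4/t) x₆²`. -/

lemma sum_sq_muT_eb {t : ℝ} (ht : 0 ≤ t) (X : Fin 6 → ℝ) :
    ∑ i, ∑ j, muT t X (eb i) j ^ 2 = (t + t⁻¹) * (X 0 ^ 2 + X 1 ^ 2 + X 2 ^ 2 + X 3 ^ 2) := by
  have hs : √t ^ 2 = t := sq_sqrt ht
  have hs' : (√t)⁻¹ ^ 2 = t⁻¹ := by rw [inv_pow, hs]
  simp only [Fin.sum_univ_six, muT, eb, Matrix.cons_val, Fin.reduceEq, ↓reduceIte, one_div]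
  linear_combination (X 0 ^ 2 + X 1 ^ 2 + X 2 ^ 2 + X 3 ^ 2) * (hs + hs')

lemma sum_sq_inner_muT_eb_eb {t : ℝ} (ht : 0 ≤ t) (X : Fin 6 → ℝ) :
    ∑ i, ∑ j, (∑ k, muT t (eb i) (eb j) k * X k) ^ 2 = 4 * t * X 4 ^ 2 + 4 * t⁻¹ * X 5 ^ 2 := by
  have hs : √t ^ 2 = t := sq_sqrt ht
  have hs' : (√t)⁻¹ ^ 2 = t⁻¹ := by rw [inv_pow, hs]
  simp only [Fin.sum_univ_six, muT, eb, Matrix.cons_val, Fin.reduceEq, ↓reduceIte, one_div]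
  linear_combination 4 * X 4 ^ 2 * hs + 4 * X 5 ^ 2 * hs'

/-- the Ricci operator of `(ℝ⁶, μ_t)` with the standard metric is
`diag(−(t²+1)/(2t), −(t²+1)/(2t), −(t²+1)/(2t), −(t²+1)/(2t), t, 1/t)`
(stated via the associated quadratic form). -/
theorem stmt9 (t : ℝ) (ht : t ∈ Set.Ioc (0 : ℝ) 1) :
    ∀ X : Fin 6 → ℝ, ricQ t X =
      ∑ k : Fin 6,
        (![-(t ^ 2 + 1) / (2 * t), -(t ^ 2 + 1) / (2 * t),
           -(t ^ 2 + 1) / (2 * t), -(t ^ 2 + 1) / (2 * t), t, 1 / t] k)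
          * (X k) ^ 2 := by
  intro X
  have ht0 : t ≠ 0 := ht.1.ne'
  rw [ricQ, sum_sq_muT_eb ht.1.le, sum_sq_inner_muT_eb_eb ht.1.le, Fin.sum_univ_six]
  simp only [Matrix.cons_val]
  field_simp
  ring
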